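/- Explicit DIO dilution map: let ρ' be a state and M ≥ 2 an integer with ρ' ≤ MΔ(ρ') in the Loewner order. Then the map 𝓔(ω) = (M/(M−1))[(Tr[Ψ_M ω] − 1/M)ρ' + (1 − Tr[Ψ_M ω])Δ(ρ')] is completely positive and trace preserving, satisfies 𝓔(Δ(ω)) = Δ(𝓔(ω)) = Δ(ρ') for every state ω (so 𝓔 is dephasing-covariant), and satisfies 𝓔(Ψ_M) = ρ'. -/

import Mathlib

open scoped Matrix ComplexOrder

namespace OneShot

variable {ι κ : Type*} [Fintype ι] [DecidableEq ι] [Fintype κ] [DecidableEq κ]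

/-- A quantum state: a positive semidefinite matrix with unit trace. -/
def IsState (ρ : Matrix ι ι ℂ) : Prop := ρ.PosSemidef ∧ ρ.trace = 1

/-- An incoherent state: a state that is diagonal in the computational basis. -/
def IsIncoherent (ρ : Matrix ι ι ℂ) : Prop := IsState ρ ∧ ρ.IsDiag

/-- The completely dephasing channel `Δ`. -/
def dephase (ρ : Matrix ι ι ℂ) : Matrix ι ι ℂ := Matrix.diagonal fun i => ρ i i

/-- The max-relative entropy of coherence
`C_max(ρ) = min_{δ ∈ 𝓘} D_max(ρ‖δ) = log₂ min {λ ≥ 0 | ∃ δ ∈ 𝓘, ρ ≤ λ δ}`. -/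
noncomputable def Cmax (ρ : Matrix ι ι ℂ) : ℝ :=
  Real.logb 2 (sInf {l : ℝ | 0 ≤ l ∧ ∃ δ, IsIncoherent δ ∧ (l • δ - ρ).PosSemidef})

/-- `C_{Δ,max}(ρ) = log₂ min {λ ≥ 0 | ρ ≤ λ Δ(ρ)}`. -/
noncomputable def CDmax (ρ : Matrix ι ι ℂ) : ℝ :=
  Real.logb 2 (sInf {l : ℝ | 0 ≤ l ∧ (l • dephase ρ - ρ).PosSemidef})

/-- Complete positivity of a linear map on matrices. -/
def CompletelyPositive (Λ : Matrix ι ι ℂ →ₗ[ℂ] Matrix κ κ ℂ) : Prop :=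
  ∀ (k : ℕ) (M : Matrix (Fin k × ι) (Fin k × ι) ℂ), M.PosSemidef →
    (Matrix.of fun p q : Fin k × κ =>
      Λ (Matrix.of fun x y => M (p.1, x) (q.1, y)) p.2 q.2).PosSemidef

/-- Trace preservation. -/
def TracePreserving (Λ : Matrix ι ι ℂ →ₗ[ℂ] Matrix κ κ ℂ) : Prop :=
  ∀ A, (Λ A).trace = A.trace

/-- A maximally incoherent operation (MIO): a CPTP map sending every incoherent state
to an incoherent state. -/
def IsMIO (Λ : Matrix ι ι ℂ →ₗ[ℂ] Matrix κ κ ℂ) : Prop :=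
  CompletelyPositive Λ ∧ TracePreserving Λ ∧ ∀ δ, IsIncoherent δ → IsIncoherent (Λ δ)

/-- A dephasing-covariant incoherent operation (DIO): a CPTP map commuting with `Δ`. -/
def IsDIO (Λ : Matrix ι ι ℂ →ₗ[ℂ] Matrix ι ι ℂ) : Prop :=
  CompletelyPositive Λ ∧ TracePreserving Λ ∧ ∀ ρ, Λ (dephase ρ) = dephase (Λ ρ)

/-- An incoherent-preserving (Kraus) operator: `K δ Kᴴ` is a nonnegative multiple of an
incoherent state, for every incoherent state `δ`. -/
def IncoherentPreserving (K : Matrix κ ι ℂ) : Prop :=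
  ∀ δ : Matrix ι ι ℂ, IsIncoherent δ →
    ∃ c : ℝ, 0 ≤ c ∧ ∃ δ' : Matrix κ κ ℂ, IsIncoherent δ' ∧ K * δ * Kᴴ = (c : ℂ) • δ'

/-- An incoherent operation (IO). -/
def IsIO (Λ : Matrix ι ι ℂ →ₗ[ℂ] Matrix κ κ ℂ) : Prop :=
  ∃ (N : ℕ) (K : Fin N → Matrix κ ι ℂ),
    (∀ n, IncoherentPreserving (K n)) ∧ (∑ n, (K n)ᴴ * K n = 1) ∧
    ∀ ρ, Λ ρ = ∑ n, K n * ρ * (K n)ᴴ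

/-- A strictly incoherent operation (SIO). -/
def IsSIO (Λ : Matrix ι ι ℂ →ₗ[ℂ] Matrix κ κ ℂ) : Prop :=
  ∃ (N : ℕ) (K : Fin N → Matrix κ ι ℂ),
    (∀ n, IncoherentPreserving (K n)) ∧ (∀ n, IncoherentPreserving (K n)ᴴ) ∧
    (∑ n, (K n)ᴴ * K n = 1) ∧ ∀ ρ, Λ ρ = ∑ n, K n * ρ * (K n)ᴴ

/-- The outer product `|ψ⟩⟨ψ|`. -/
def outer (ψ : ι → ℂ) : Matrix ι ι ℂ := Matrix.of fun i j => ψ i * star (ψ j)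

/-- `T ψ` is the number of nonzero computational-basis coefficients of `ψ`. -/
noncomputable def T (ψ : ι → ℂ) : ℕ := (Finset.univ.filter fun i => ψ i ≠ 0).card

/-- A finite pure-state decomposition `ρ = Σ_j p_j |ψ_j⟩⟨ψ_j|`. -/
def IsDecomposition (ρ : Matrix ι ι ℂ) (n : ℕ) (p : Fin n → ℝ) (ψ : Fin n → ι → ℂ) : Prop :=
  (∀ j, 0 < p j) ∧ (∑ j, p j = 1) ∧ (∀ j, ∑ i, Complex.normSq (ψ j i) = 1) ∧
    ρ = ∑ j, p j • outer (ψ j)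

/-- `C_0(ρ) = min over decompositions of max_j log₂ T(ψ_j)`. -/
noncomputable def C0 (ρ : Matrix ι ι ℂ) : ℝ :=
  sInf { r | ∃ n p ψ, IsDecomposition ρ n p ψ ∧
    r = Real.logb 2 (↑(Finset.univ.sup fun j => T (ψ j)) : ℝ) }

/-- Matrix square root of a positive semidefinite matrix (junk value `0` elsewhere). -/
noncomputable def msqrt (A : Matrix ι ι ℂ) : Matrix ι ι ℂ :=
  letI := Classical.propDecidable A.PosSemidef
  if h : A.PosSemidef then
    (h.1.eigenvectorUnitary : Matrix ι ι ℂ) *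
      Matrix.diagonal ((↑) ∘ (fun x : ℝ => √x) ∘ h.1.eigenvalues) *
      (star h.1.eigenvectorUnitary : Matrix ι ι ℂ)
  else 0

/-- Uhlmann fidelity `F(ρ,σ) = (Tr √(√ρ σ √ρ))²`. -/
noncomputable def Fid (ρ σ : Matrix ι ι ℂ) : ℝ :=
  ((msqrt (msqrt ρ * σ * msqrt ρ)).trace.re) ^ 2

/-- Smoothed `C_max`. -/
noncomputable def Cmaxeps (ρ : Matrix ι ι ℂ) (ε : ℝ) : ℝ :=
  sInf { r | ∃ ρ', IsState ρ' ∧ 1 - ε ≤ Fid ρ ρ' ∧ r = Cmax ρ' }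

/-- Smoothed `C_{Δ,max}`. -/
noncomputable def CDmaxeps (ρ : Matrix ι ι ℂ) (ε : ℝ) : ℝ :=
  sInf { r | ∃ ρ', IsState ρ' ∧ 1 - ε ≤ Fid ρ ρ' ∧ r = CDmax ρ' }

/-- Smoothed `C_0`. -/
noncomputable def C0eps (ρ : Matrix ι ι ℂ) (ε : ℝ) : ℝ :=
  sInf { r | ∃ ρ', IsState ρ' ∧ 1 - ε ≤ Fid ρ ρ' ∧ r = C0 ρ' }

/-- The maximally coherent state `Ψ_M = |Ψ_M⟩⟨Ψ_M|` of dimension `M`. -/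
noncomputable def PsiM (M : ℕ) : Matrix (Fin M) (Fin M) ℂ := Matrix.of fun _ _ => (1 : ℂ) / M

/-- One-shot coherence cost under MIO. -/
noncomputable def CMIOeps (ρ : Matrix ι ι ℂ) (ε : ℝ) : ℝ :=
  sInf { r | ∃ M : ℕ, 1 ≤ M ∧ r = Real.logb 2 M ∧
    ∃ Λ : Matrix (Fin M) (Fin M) ℂ →ₗ[ℂ] Matrix ι ι ℂ, IsMIO Λ ∧ 1 - ε ≤ Fid ρ (Λ (PsiM M)) }

/-- One-shot coherence cost under DIO. -/
noncomputable def CDIOeps (ρ : Matrix ι ι ℂ) (ε : ℝ) : ℝ :=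
  sInf { r | ∃ M : ℕ, 1 ≤ M ∧ r = Real.logb 2 M ∧
    ∃ Λ : Matrix (Fin M) (Fin M) ℂ →ₗ[ℂ] Matrix ι ι ℂ,
      CompletelyPositive Λ ∧ TracePreserving Λ ∧ (∀ ω, Λ (dephase ω) = dephase (Λ ω)) ∧
      1 - ε ≤ Fid ρ (Λ (PsiM M)) }

/-- One-shot coherence cost under IO. -/
noncomputable def CIOeps (ρ : Matrix ι ι ℂ) (ε : ℝ) : ℝ :=
  sInf { r | ∃ M : ℕ, 1 ≤ M ∧ r = Real.logb 2 M ∧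
    ∃ Λ : Matrix (Fin M) (Fin M) ℂ →ₗ[ℂ] Matrix ι ι ℂ, IsIO Λ ∧ 1 - ε ≤ Fid ρ (Λ (PsiM M)) }

/-- One-shot coherence cost under SIO. -/
noncomputable def CSIOeps (ρ : Matrix ι ι ℂ) (ε : ℝ) : ℝ :=
  sInf { r | ∃ M : ℕ, 1 ≤ M ∧ r = Real.logb 2 M ∧
    ∃ Λ : Matrix (Fin M) (Fin M) ℂ →ₗ[ℂ] Matrix ι ι ℂ, IsSIO Λ ∧ 1 - ε ≤ Fid ρ (Λ (PsiM M)) }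

/-- Matrix logarithm (base 2) via the spectral decomposition, with `log₂ 0 = 0` junk
convention on the kernel, and junk value `0` on non-Hermitian matrices. -/
noncomputable def mlog2 (A : Matrix ι ι ℂ) : Matrix ι ι ℂ :=
  letI := Classical.propDecidable A.IsHermitian
  if h : A.IsHermitian then
    (h.eigenvectorUnitary : Matrix ι ι ℂ) *
      Matrix.diagonal (fun i => (Real.logb 2 (h.eigenvalues i) : ℂ)) *
      (h.eigenvectorUnitary : Matrix ι ι ℂ)ᴴ
  else 0

/-- The relative entropy of coherence `C_r(ρ) = min_{δ ∈ 𝓘} S(ρ‖δ)`, where the minimum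
is (equivalently) restricted to those `δ` whose support contains the support of `ρ`,
on which `S(ρ‖δ) = Tr[ρ (log₂ ρ − log₂ δ)]` is finite. -/
noncomputable def Cr (ρ : Matrix ι ι ℂ) : ℝ :=
  sInf { r | ∃ δ, IsIncoherent δ ∧ (∀ v : ι → ℂ, δ.mulVec v = 0 → ρ.mulVec v = 0) ∧
    r = ((ρ * (mlog2 ρ - mlog2 δ)).trace).re }

/-- Von Neumann entropy (base 2). -/
noncomputable def vN (σ : Matrix ι ι ℂ) : ℝ := -((σ * mlog2 σ).trace.re)

/-- The coherence of formation. -/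
noncomputable def Cf (ρ : Matrix ι ι ℂ) : ℝ :=
  sInf { r | ∃ n p ψ, IsDecomposition ρ n p ψ ∧
    r = ∑ j, p j * vN (dephase (outer (ψ j))) }

/-- The set `A_ρ = { (1/t)[(1+t)Δ(ρ) − ρ] : t > 0, (1+t)Δ(ρ) − ρ ≥ 0 }`. -/
def Aset (ρ : Matrix ι ι ℂ) : Set (Matrix ι ι ℂ) :=
  { σ | ∃ t : ℝ, 0 < t ∧ ((1 + t) • dephase ρ - ρ).PosSemidef ∧
      σ = t⁻¹ • ((1 + t) • dephase ρ - ρ) }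

/-- The `n`-fold tensor power `ρ^{⊗ n}`. -/
def tpow (ρ : Matrix ι ι ℂ) (n : ℕ) : Matrix (Fin n → ι) (Fin n → ι) ℂ :=
  Matrix.of fun i j => ∏ t, ρ (i t) (j t)

/-!
The map is measure-and-prepare: measure the two-outcome POVM `{Ψ_M, 1 - Ψ_M}`, prepare `ρ'` on
the first outcome and `σ = (M Δ(ρ') - ρ') / (M - 1)` on the second; since
`Tr[(1 - Ψ_M) ω] = 1 - Tr[Ψ_M ω]` for a state, this is the displayed formula. The hypothesis
`ρ' ≤ M Δ(ρ')` says exactly that `σ ≥ 0`, so both branches are completely positive (a map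
`ω ↦ Tr[A†A ω] B†B` has Kraus operators `B† |s⟩⟨r| A`), and `Tr σ = 1` makes the map trace
preserving. Covariance comes from `Δ(σ) = Δ(ρ')`, which gives `Δ(𝓔(ω)) = Tr ω · Δ(ρ')`, and from
`Tr[Ψ_M Δ(ω)] = Tr ω / M`, the weight at which the mixture of `ρ'` and `σ` is `Δ(ρ')`.
-/

open scoped Kronecker in
theorem CompletelyPositive.of_kraus {m n α : Type*} [Fintype m] [Fintype n] [Fintype α]
    {Λ : Matrix m m ℂ →ₗ[ℂ] Matrix n n ℂ} (K : α → Matrix n m ℂ)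
    (hΛ : ∀ ω, Λ ω = ∑ a, K a * ω * (K a)ᴴ) : CompletelyPositive Λ := by
  intro k X hX
  let K' a : Matrix (Fin k × n) (Fin k × m) ℂ := (1 : Matrix (Fin k) (Fin k) ℂ) ⊗ₖ K a
  have hblock : (Matrix.of fun p q : Fin k × n =>
      Λ (Matrix.of fun x y => X (p.1, x) (q.1, y)) p.2 q.2) = ∑ a, K' a * X * (K' a)ᴴ := by
    ext p q
    simp [K', hΛ, Matrix.sum_apply, Matrix.mul_apply, Matrix.one_apply, Fintype.sum_prod_type,
      Finset.sum_mul, apply_ite (starRingEnd ℂ), mul_ite, Finset.sum_ite_eq]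
  rw [hblock]
  exact Matrix.posSemidef_sum _ fun a _ => hX.mul_mul_conjTranspose_same _

theorem CompletelyPositive.add {m n : Type*} {Λ₁ Λ₂ : Matrix m m ℂ →ₗ[ℂ] Matrix n n ℂ}
    (h₁ : CompletelyPositive Λ₁) (h₂ : CompletelyPositive Λ₂) :
    CompletelyPositive (Λ₁ + Λ₂) :=
  fun k X hX => (h₁ k X hX).add (h₂ k X hX)

def measurePrepare {m n : Type*} [Fintype m] (P : Matrix m m ℂ) (S : Matrix n n ℂ) :
    Matrix m m ℂ →ₗ[ℂ] Matrix n n ℂ :=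
  (Matrix.traceLinearMap m ℂ ℂ ∘ₗ LinearMap.mulLeft ℂ P).smulRight S

@[simp]
theorem measurePrepare_apply {m n : Type*} [Fintype m] (P : Matrix m m ℂ) (S : Matrix n n ℂ)
    (ω : Matrix m m ℂ) : measurePrepare P S ω = (P * ω).trace • S :=
  rfl

open Matrix in
theorem measurePrepare_conjTranspose_mul_self {m n m' n' : Type*} [Fintype m] [Fintype n]
    [Fintype m'] [Fintype n'] [DecidableEq m'] [DecidableEq n']
    (A : Matrix m' m ℂ) (B : Matrix n' n ℂ) (ω : Matrix m m ℂ) :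
    measurePrepare (Aᴴ * A) (Bᴴ * B) ω =
      ∑ x : m' × n',
        (Bᴴ * single x.2 x.1 (1 : ℂ) * A) * ω * (Bᴴ * single x.2 x.1 (1 : ℂ) * A)ᴴ := by
  have hterm (r : m') (s : n') :
      (Bᴴ * single s r (1 : ℂ) * A) * ω * (Bᴴ * single s r (1 : ℂ) * A)ᴴ =
        (A * ω * Aᴴ) r r • (Bᴴ * single s s (1 : ℂ) * B) := calc
    _ = Bᴴ * (single s r (1 : ℂ) * (A * ω * Aᴴ) * single r s (1 : ℂ)) * B := by
      simp only [conjTranspose_mul, conjTranspose_conjTranspose, conjTranspose_single, star_one,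
        Matrix.mul_assoc]
    _ = _ := by
      rw [single_mul_mul_single, one_mul, mul_one, ← Matrix.smul_mul, ← Matrix.mul_smul,
        smul_single, smul_eq_mul, mul_one]
  rw [measurePrepare_apply, Fintype.sum_prod_type, Finset.sum_comm]
  simp only [hterm, ← Finset.sum_smul]
  rw [← Finset.smul_sum, ← Matrix.sum_mul, ← Matrix.mul_sum, sum_single_one, Matrix.mul_one,
    Matrix.mul_assoc, trace_mul_comm, Matrix.mul_assoc]
  rfl

open scoped MatrixOrder in
theorem completelyPositive_measurePrepare {m n : Type*} [Fintype m] [Fintype n] [DecidableEq m]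
    [DecidableEq n] {P : Matrix m m ℂ} {S : Matrix n n ℂ} (hP : P.PosSemidef)
    (hS : S.PosSemidef) : CompletelyPositive (measurePrepare P S) := by
  obtain ⟨A, rfl⟩ := CStarAlgebra.nonneg_iff_eq_star_mul_self.mp hP.nonneg
  obtain ⟨B, rfl⟩ := CStarAlgebra.nonneg_iff_eq_star_mul_self.mp hS.nonneg
  exact .of_kraus _ (measurePrepare_conjTranspose_mul_self A B)

section Dephase

variable {n : Type*} [DecidableEq n]

theorem dephase_add (ρ σ : Matrix n n ℂ) : dephase (ρ + σ) = dephase ρ + dephase σ := by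
  simp [dephase, Matrix.diagonal_add]

theorem dephase_sub (ρ σ : Matrix n n ℂ) : dephase (ρ - σ) = dephase ρ - dephase σ := by
  simp [dephase, Matrix.diagonal_sub]

theorem dephase_smul (c : ℂ) (ρ : Matrix n n ℂ) : dephase (c • ρ) = c • dephase ρ := by
  rw [dephase, dephase, ← Matrix.diagonal_smul]
  rfl

@[simp]
theorem dephase_dephase (ρ : Matrix n n ℂ) : dephase (dephase ρ) = dephase ρ := by
  simp [dephase]

@[simp]
theorem trace_dephase [Fintype n] (ρ : Matrix n n ℂ) : (dephase ρ).trace = ρ.trace := by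
  simp [dephase, Matrix.trace]

end Dephase

theorem isStarProjection_PsiM {M : ℕ} (hM : M ≠ 0) : IsStarProjection (PsiM M) where
  isIdempotentElem := by
    ext i j
    simp only [PsiM, Matrix.mul_apply, Matrix.of_apply, Finset.sum_const, Finset.card_univ,
      Fintype.card_fin, nsmul_eq_mul]
    field_simp
  isSelfAdjoint := by
    ext i j
    simp [PsiM]

theorem trace_PsiM {M : ℕ} (hM : M ≠ 0) : (PsiM M).trace = 1 := by
  simp [PsiM, Matrix.trace, hM]

theorem trace_PsiM_mul_dephase (M : ℕ) (ω : Matrix (Fin M) (Fin M) ℂ) :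
    (PsiM M * dephase ω).trace = ω.trace / M := by
  simp [PsiM, dephase, Matrix.trace, Matrix.mul_apply, Matrix.diagonal_apply, div_eq_inv_mul,
    Finset.mul_sum]

section Dilution

variable {n : Type*} [DecidableEq n] {M : ℕ}

noncomputable def dilutionResidual (M : ℕ) (ρ : Matrix n n ℂ) : Matrix n n ℂ :=
  ((M : ℂ) - 1)⁻¹ • ((M : ℂ) • dephase ρ - ρ)

theorem posSemidef_dilutionResidual (hM : 1 < M) {ρ : Matrix n n ℂ}
    (hle : ((M : ℝ) • dephase ρ - ρ).PosSemidef) : (dilutionResidual M ρ).PosSemidef := by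
  have hcoef : (0 : ℝ) ≤ ((M : ℝ) - 1)⁻¹ := by
    have : (1 : ℝ) < M := by exact_mod_cast hM
    exact inv_nonneg.mpr (by linarith)
  convert hle.smul hcoef using 1
  simp only [dilutionResidual, ← Complex.coe_smul]
  push_cast
  rfl

theorem dephase_dilutionResidual (hM : M ≠ 1) (ρ : Matrix n n ℂ) :
    dephase (dilutionResidual M ρ) = dephase ρ := by
  have hM' : (M : ℂ) - 1 ≠ 0 := sub_ne_zero.mpr (by exact_mod_cast hM)
  rw [dilutionResidual, dephase_smul, dephase_sub, dephase_smul, dephase_dephase]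
  nth_rw 2 [← one_smul ℂ (dephase ρ)]
  rw [← sub_smul, smul_smul, inv_mul_cancel₀ hM', one_smul]

theorem trace_dilutionResidual [Fintype n] (hM : M ≠ 1) {ρ : Matrix n n ℂ} (hρ : ρ.trace = 1) :
    (dilutionResidual M ρ).trace = 1 := by
  rw [← trace_dephase, dephase_dilutionResidual hM, trace_dephase, hρ]

theorem inv_smul_add_one_sub_inv_smul_dilutionResidual (hM₀ : M ≠ 0) (hM₁ : M ≠ 1)
    (ρ : Matrix n n ℂ) :
    (M : ℂ)⁻¹ • ρ + (1 - (M : ℂ)⁻¹) • dilutionResidual M ρ = dephase ρ := by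
  have h₀ : (M : ℂ) ≠ 0 := by exact_mod_cast hM₀
  have h₁ : (M : ℂ) - 1 ≠ 0 := sub_ne_zero.mpr (by exact_mod_cast hM₁)
  rw [dilutionResidual, smul_smul, smul_sub, smul_smul]
  match_scalars <;> field_simp
  ring

noncomputable def dilutionMap (M : ℕ) (ρ : Matrix n n ℂ) :
    Matrix (Fin M) (Fin M) ℂ →ₗ[ℂ] Matrix n n ℂ :=
  measurePrepare (PsiM M) ρ + measurePrepare (1 - PsiM M) (dilutionResidual M ρ)

theorem dilutionMap_apply (ρ : Matrix n n ℂ) (ω : Matrix (Fin M) (Fin M) ℂ) :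
    dilutionMap M ρ ω =
      (PsiM M * ω).trace • ρ + (ω.trace - (PsiM M * ω).trace) • dilutionResidual M ρ := by
  simp [dilutionMap, Matrix.sub_mul, Matrix.trace_sub]

theorem dilutionMap_apply_of_trace_eq_one (hM : 1 < M) (ρ : Matrix n n ℂ)
    {ω : Matrix (Fin M) (Fin M) ℂ} (hω : ω.trace = 1) :
    dilutionMap M ρ ω = ((M : ℂ) / ((M : ℂ) - 1)) •
      (((PsiM M * ω).trace - 1 / (M : ℂ)) • ρ + (1 - (PsiM M * ω).trace) • dephase ρ) := by
  have h₀ : (M : ℂ) ≠ 0 := by exact_mod_cast (by omega : M ≠ 0)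
  have h₁ : (M : ℂ) - 1 ≠ 0 := sub_ne_zero.mpr (by exact_mod_cast (by omega : M ≠ 1))
  rw [dilutionMap_apply, hω, dilutionResidual]
  match_scalars <;> field_simp
  ring

open scoped MatrixOrder in
theorem completelyPositive_dilutionMap [Fintype n] (hM : 1 < M) {ρ : Matrix n n ℂ}
    (hρ : ρ.PosSemidef) (hle : ((M : ℝ) • dephase ρ - ρ).PosSemidef) :
    CompletelyPositive (dilutionMap M ρ) := by
  have hΨ := isStarProjection_PsiM (M := M) (by omega)
  exact (completelyPositive_measurePrepare (Matrix.nonneg_iff_posSemidef.mp hΨ.nonneg) hρ).add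
    (completelyPositive_measurePrepare (Matrix.nonneg_iff_posSemidef.mp hΨ.one_sub_nonneg)
      (posSemidef_dilutionResidual hM hle))

theorem tracePreserving_dilutionMap [Fintype n] (hM : M ≠ 1) {ρ : Matrix n n ℂ}
    (hρ : ρ.trace = 1) : TracePreserving (dilutionMap M ρ) := by
  intro ω
  simp [dilutionMap_apply, Matrix.trace_add, trace_dilutionResidual hM hρ, hρ]

theorem dephase_dilutionMap (hM : M ≠ 1) (ρ : Matrix n n ℂ) (ω : Matrix (Fin M) (Fin M) ℂ) :
    dephase (dilutionMap M ρ ω) = ω.trace • dephase ρ := by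
  rw [dilutionMap_apply, dephase_add, dephase_smul, dephase_smul, dephase_dilutionResidual hM,
    ← add_smul, add_sub_cancel]

theorem dilutionMap_dephase (hM : 1 < M) (ρ : Matrix n n ℂ) (ω : Matrix (Fin M) (Fin M) ℂ) :
    dilutionMap M ρ (dephase ω) = ω.trace • dephase ρ := by
  rw [dilutionMap_apply, trace_PsiM_mul_dephase, trace_dephase,
    ← inv_smul_add_one_sub_inv_smul_dilutionResidual (M := M) (by omega) (by omega) ρ]
  match_scalars <;> ring

theorem dilutionMap_PsiM (hM : M ≠ 0) (ρ : Matrix n n ℂ) : dilutionMap M ρ (PsiM M) = ρ := by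
  rw [dilutionMap_apply, (isStarProjection_PsiM hM).isIdempotentElem.eq, trace_PsiM hM, sub_self,
    zero_smul, add_zero, one_smul]

end Dilution

/-- explicit DIO dilution map. -/
theorem DIO_dilution_map {d M : ℕ} (hM : 2 ≤ M) (ρ' : Matrix (Fin d) (Fin d) ℂ)
    (hρ' : IsState ρ') (hle : ((M : ℝ) • dephase ρ' - ρ').PosSemidef) :
    ∃ Λ : Matrix (Fin M) (Fin M) ℂ →ₗ[ℂ] Matrix (Fin d) (Fin d) ℂ,
      (∀ ω, IsState ω → Λ ω = ((M : ℂ) / ((M : ℂ) - 1)) •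
        (((PsiM M * ω).trace - 1 / (M : ℂ)) • ρ' +
          (1 - (PsiM M * ω).trace) • dephase ρ')) ∧
      CompletelyPositive Λ ∧ TracePreserving Λ ∧
      (∀ ω, IsState ω → Λ (dephase ω) = dephase ρ' ∧ dephase (Λ ω) = dephase ρ') ∧
      Λ (PsiM M) = ρ' := by
  have hM₁ : M ≠ 1 := by omega
  refine ⟨dilutionMap M ρ', fun ω hω => dilutionMap_apply_of_trace_eq_one hM ρ' hω.2,
    completelyPositive_dilutionMap hM hρ'.1 hle, tracePreserving_dilutionMap hM₁ hρ'.2,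
    fun ω hω => ⟨?_, ?_⟩, dilutionMap_PsiM (by omega) ρ'⟩
  · rw [dilutionMap_dephase hM, hω.2, one_smul]
  · rw [dephase_dilutionMap hM₁, hω.2, one_smul]

end OneShot
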